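/- Let ℓ₁, ℓ₃, ℓ₄ > 0 and k ∈ ℝ. Consider the system of equations in complex unknowns c₁, c₂, c₃, c₄: c₁ = (1/√2)·( exp(i·k·ℓ₃)·c₃ + exp(i·k·ℓ₄)·c₄ ), c₂ = (1/√2)·( exp(i·k·ℓ₃)·c₃ − exp(i·k·ℓ₄)·c₄ ), c₃ = (1/√2)·exp(i·k·ℓ₁)·( c₁ + c₂ ), c₄ = (1/√2)·exp(i·k·ℓ₁)·( c₁ − c₂ ). Then: (a) a nonzero solution exists if and only if exp(i·k·(ℓ₁+ℓ₃)) = 1 or exp(i·k·(ℓ₁+ℓ₄)) = 1; (b) if exp(i·k·(ℓ₁+ℓ₃)) = 1 and exp(i·k·(ℓ₁+ℓ₄)) ≠ 1, then every solution has c₄ = 0, and if exp(i·k·(ℓ₁+ℓ₄)) = 1 and exp(i·k·(ℓ₁+ℓ₃)) ≠ 1, then every solution has c₃ = 0. -/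

import Mathlib

/-- The vertex coupling conditions for the compact two-loop graph with two vertices,
two edges of equal length `ℓ₁ = ℓ₂` from A to B, and two edges of lengths `ℓ₃`, `ℓ₄`
from B to A, with coupling matrix `(1/√2)·[[1,1],[1,-1]]` at both vertices, for an
eigenfunction `c_j · exp(ikx)` on the `j`-th edge. -/
def compactTwoLoopConds (ℓ₁ ℓ₃ ℓ₄ k : ℝ) (c₁ c₂ c₃ c₄ : ℂ) : Prop :=
  c₁ = (1 / (Real.sqrt 2 : ℂ)) * (Complex.exp (Complex.I * (k : ℂ) * (ℓ₃ : ℂ)) * c₃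
      + Complex.exp (Complex.I * (k : ℂ) * (ℓ₄ : ℂ)) * c₄) ∧
  c₂ = (1 / (Real.sqrt 2 : ℂ)) * (Complex.exp (Complex.I * (k : ℂ) * (ℓ₃ : ℂ)) * c₃
      - Complex.exp (Complex.I * (k : ℂ) * (ℓ₄ : ℂ)) * c₄) ∧
  c₃ = (1 / (Real.sqrt 2 : ℂ)) * Complex.exp (Complex.I * (k : ℂ) * (ℓ₁ : ℂ)) * (c₁ + c₂) ∧
  c₄ = (1 / (Real.sqrt 2 : ℂ)) * Complex.exp (Complex.I * (k : ℂ) * (ℓ₁ : ℂ)) * (c₁ - c₂)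

/-!
Summing and subtracting the two equations at vertex A gives `c₁ + c₂ = √2 e^{ikℓ₃} c₃` and
`c₁ - c₂ = √2 e^{ikℓ₄} c₄`, so the equations at vertex B decouple into
`e^{ik(ℓ₁+ℓ₃)} c₃ = c₃` and `e^{ik(ℓ₁+ℓ₄)} c₄ = c₄`, while `c₁, c₂` are determined by `c₃, c₄`.
Hence `c₃` (resp. `c₄`) can be nonzero exactly when the corresponding quantization condition holds.
-/

open Complex

lemma hadamard_loop_iff {R : Type*} [CommRing R] {s e a b c₁ c₂ c₃ c₄ : R}
    (hs : 2 * s ^ 2 = 1) :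
    (c₁ = s * (a * c₃ + b * c₄) ∧ c₂ = s * (a * c₃ - b * c₄) ∧
        c₃ = s * e * (c₁ + c₂) ∧ c₄ = s * e * (c₁ - c₂)) ↔
      (c₁ = s * (a * c₃ + b * c₄) ∧ c₂ = s * (a * c₃ - b * c₄) ∧
        e * a * c₃ = c₃ ∧ e * b * c₄ = c₄) := by
  constructor
  · rintro ⟨h₁, h₂, h₃, h₄⟩
    refine ⟨h₁, h₂, ?_, ?_⟩
    · linear_combination -(h₃ + s * e * (h₁ + h₂) + e * a * c₃ * hs)
    · linear_combination -(h₄ + s * e * (h₁ - h₂) + e * b * c₄ * hs)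
  · rintro ⟨h₁, h₂, h₃, h₄⟩
    refine ⟨h₁, h₂, ?_, ?_⟩
    · linear_combination -(s * e * (h₁ + h₂) + h₃ + e * a * c₃ * hs)
    · linear_combination -(s * e * (h₁ - h₂) + h₄ + e * b * c₄ * hs)

lemma two_mul_one_div_sqrt_two_sq : 2 * (1 / (Real.sqrt 2 : ℂ)) ^ 2 = 1 := by
  rw [div_pow, ← ofReal_pow, Real.sq_sqrt zero_le_two]
  norm_num

lemma exp_I_mul_mul_add (k x y : ℝ) :
    exp (I * k * (x + y)) = exp (I * k * x) * exp (I * k * y) := by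
  rw [← exp_add, mul_add]

lemma compactTwoLoopConds_iff {ℓ₁ ℓ₃ ℓ₄ k : ℝ} {c₁ c₂ c₃ c₄ : ℂ} :
    compactTwoLoopConds ℓ₁ ℓ₃ ℓ₄ k c₁ c₂ c₃ c₄ ↔
      c₁ = 1 / (Real.sqrt 2 : ℂ) * (exp (I * k * ℓ₃) * c₃ + exp (I * k * ℓ₄) * c₄) ∧
      c₂ = 1 / (Real.sqrt 2 : ℂ) * (exp (I * k * ℓ₃) * c₃ - exp (I * k * ℓ₄) * c₄) ∧
      exp (I * k * (ℓ₁ + ℓ₃)) * c₃ = c₃ ∧ exp (I * k * (ℓ₁ + ℓ₄)) * c₄ = c₄ := by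
  rw [exp_I_mul_mul_add, exp_I_mul_mul_add]
  exact hadamard_loop_iff two_mul_one_div_sqrt_two_sq

theorem stmt14_general (ℓ₁ ℓ₃ ℓ₄ : ℝ) (k : ℝ) :
    ((∃ c₁ c₂ c₃ c₄ : ℂ, ¬(c₁ = 0 ∧ c₂ = 0 ∧ c₃ = 0 ∧ c₄ = 0) ∧
        compactTwoLoopConds ℓ₁ ℓ₃ ℓ₄ k c₁ c₂ c₃ c₄) ↔
      (Complex.exp (Complex.I * (k : ℂ) * ((ℓ₁ : ℂ) + (ℓ₃ : ℂ))) = 1 ∨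
       Complex.exp (Complex.I * (k : ℂ) * ((ℓ₁ : ℂ) + (ℓ₄ : ℂ))) = 1)) ∧
    ((Complex.exp (Complex.I * (k : ℂ) * ((ℓ₁ : ℂ) + (ℓ₃ : ℂ))) = 1 ∧
      Complex.exp (Complex.I * (k : ℂ) * ((ℓ₁ : ℂ) + (ℓ₄ : ℂ))) ≠ 1 →
      ∀ c₁ c₂ c₃ c₄ : ℂ, compactTwoLoopConds ℓ₁ ℓ₃ ℓ₄ k c₁ c₂ c₃ c₄ → c₄ = 0) ∧
     (Complex.exp (Complex.I * (k : ℂ) * ((ℓ₁ : ℂ) + (ℓ₄ : ℂ))) = 1 ∧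
      Complex.exp (Complex.I * (k : ℂ) * ((ℓ₁ : ℂ) + (ℓ₃ : ℂ))) ≠ 1 →
      ∀ c₁ c₂ c₃ c₄ : ℂ, compactTwoLoopConds ℓ₁ ℓ₃ ℓ₄ k c₁ c₂ c₃ c₄ → c₃ = 0)) := by
  refine ⟨⟨?_, ?_⟩, ?_, ?_⟩
  · rintro ⟨c₁, c₂, c₃, c₄, hne, hc⟩
    obtain ⟨rfl, rfl, h₃, h₄⟩ := compactTwoLoopConds_iff.1 hc
    rcases mul_left_eq_self₀.1 h₃ with h | rfl
    · exact .inl h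
    rcases mul_left_eq_self₀.1 h₄ with h | rfl
    · exact .inr h
    simp at hne
  · rintro (h | h)
    · exact ⟨_, _, 1, 0, by simp,
        compactTwoLoopConds_iff.2 ⟨rfl, rfl, by rw [h, one_mul], mul_zero _⟩⟩
    · exact ⟨_, _, 0, 1, by simp,
        compactTwoLoopConds_iff.2 ⟨rfl, rfl, mul_zero _, by rw [h, one_mul]⟩⟩
  · rintro ⟨-, h⟩ c₁ c₂ c₃ c₄ hc
    exact (mul_left_eq_self₀.1 (compactTwoLoopConds_iff.1 hc).2.2.2).resolve_left h
  · rintro ⟨-, h⟩ c₁ c₂ c₃ c₄ hc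
    exact (mul_left_eq_self₀.1 (compactTwoLoopConds_iff.1 hc).2.2.1).resolve_left h

/-- On the compact two-loop graph: (a) a nonzero solution of the vertex conditions
exists iff `e^{ik(ℓ₁+ℓ₃)} = 1` or `e^{ik(ℓ₁+ℓ₄)} = 1`; (b) if only the first
(resp. only the second) quantization condition holds, every solution has `c₄ = 0`
(resp. `c₃ = 0`), so eigenfunctions vanish on an entire edge and the unique
continuation principle fails even on compact graphs. -/
theorem stmt14 (ℓ₁ ℓ₃ ℓ₄ : ℝ) (h1 : 0 < ℓ₁) (h3 : 0 < ℓ₃) (h4 : 0 < ℓ₄) (k : ℝ) :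
    ((∃ c₁ c₂ c₃ c₄ : ℂ, ¬(c₁ = 0 ∧ c₂ = 0 ∧ c₃ = 0 ∧ c₄ = 0) ∧
        compactTwoLoopConds ℓ₁ ℓ₃ ℓ₄ k c₁ c₂ c₃ c₄) ↔
      (Complex.exp (Complex.I * (k : ℂ) * ((ℓ₁ : ℂ) + (ℓ₃ : ℂ))) = 1 ∨
       Complex.exp (Complex.I * (k : ℂ) * ((ℓ₁ : ℂ) + (ℓ₄ : ℂ))) = 1)) ∧
    ((Complex.exp (Complex.I * (k : ℂ) * ((ℓ₁ : ℂ) + (ℓ₃ : ℂ))) = 1 ∧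
      Complex.exp (Complex.I * (k : ℂ) * ((ℓ₁ : ℂ) + (ℓ₄ : ℂ))) ≠ 1 →
      ∀ c₁ c₂ c₃ c₄ : ℂ, compactTwoLoopConds ℓ₁ ℓ₃ ℓ₄ k c₁ c₂ c₃ c₄ → c₄ = 0) ∧
     (Complex.exp (Complex.I * (k : ℂ) * ((ℓ₁ : ℂ) + (ℓ₄ : ℂ))) = 1 ∧
      Complex.exp (Complex.I * (k : ℂ) * ((ℓ₁ : ℂ) + (ℓ₃ : ℂ))) ≠ 1 →
      ∀ c₁ c₂ c₃ c₄ : ℂ, compactTwoLoopConds ℓ₁ ℓ₃ ℓ₄ k c₁ c₂ c₃ c₄ → c₃ = 0)) :=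
  stmt14_general ℓ₁ ℓ₃ ℓ₄ k
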